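/- arXiv:2001.07543 — 4 statements merged into one kernel-verified Lean document; each statement's English description precedes it below -/
import Mathlib

section
/- Maximum principle for the one-dimensional operator with transmission conditions: suppose (f₋, f₊) belongs to D(A) and let M = max( sup_{x∈[a,0]} f₋(x), sup_{x∈[0,b]} f₊(x) ). If x₀ ∈ [a,0] and f₋(x₀) = M, then κ f₋''(x₀) ≤ 0; and if x₀ ∈ [0,b] and f₊(x₀) = M, then f₊''(x₀) ≤ 0. -/
/-!
At a maximum `x₀` of `f` on `[c, d]`, the directions into the interval give
`f'(x₀) (y - x₀) ≤ 0` for all `y ∈ [c, d]`, hence `f'(x₀) = 0` unless `x₀` is an endpoint, where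
only one sign follows. The missing sign comes from the Neumann conditions at `a` and `b` and from
the transmission conditions at `0`: `f₋'(0) = β (f₊(0) - f₋(0)) ≤ 0` when `f₋(0)` is the common
maximum `M`, and `f₊'(0) = α (f₊(0) - f₋(0)) ≥ 0` when `f₊(0) = M`. Once `f'(x₀) = 0`, a positive
`f''(x₀)` would make `f'` point away from `x₀` near `x₀`, so by the mean value theorem `f` would
increase away from `x₀`.
-/

open Set

/-- One-sided first derivative on the interval `[a,b]`. -/
noncomputable def dIcc (a b : ℝ) (f : ℝ → ℝ) : ℝ → ℝ :=
  derivWithin f (Set.Icc a b)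

/-- One-sided second derivative on the interval `[a,b]`. -/
noncomputable def d2Icc (a b : ℝ) (f : ℝ → ℝ) : ℝ → ℝ :=
  derivWithin (derivWithin f (Set.Icc a b)) (Set.Icc a b)

open Filter Topology

section

variable {f : ℝ → ℝ} {s : Set ℝ} {x₀ y : ℝ}

theorem IsMaxOn.derivWithin_mul_sub_nonpos (hs : Convex ℝ s) (hmax : IsMaxOn f s x₀)
    (hx₀ : x₀ ∈ s) (hy : y ∈ s) : derivWithin f s x₀ * (y - x₀) ≤ 0 := by
  have := hmax.localize.fderivWithin_nonpos
    (sub_mem_posTangentConeAt_of_segment_subset (hs.segment_subset hx₀ hy))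
  rwa [← toSpanSingleton_derivWithin, ContinuousLinearMap.toSpanSingleton_apply, smul_eq_mul,
    mul_comm] at this

theorem Convex.exists_mem_Ioo_sub_eq_derivWithin_mul (hs : Convex ℝ s)
    (hf : DifferentiableOn ℝ f s) (hx₀ : x₀ ∈ s) (hy : y ∈ s) (hlt : x₀ < y) :
    ∃ ξ ∈ Ioo x₀ y, f y - f x₀ = derivWithin f s ξ * (y - x₀) := by
  have hIcc : Icc x₀ y ⊆ s := (convex_iff_ordConnected.1 hs).out hx₀ hy
  have hIoo : Ioo x₀ y ⊆ interior s :=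
    isOpen_Ioo.subset_interior_iff.2 (Ioo_subset_Icc_self.trans hIcc)
  obtain ⟨ξ, hξ, hslope⟩ := exists_hasDerivAt_eq_slope f (derivWithin f s) hlt
    (hf.continuousOn.mono hIcc) fun z hz =>
      (hf z (hIcc (Ioo_subset_Icc_self hz))).hasDerivWithinAt.hasDerivAt
        (mem_interior_iff_mem_nhds.1 (hIoo hz))
  refine ⟨ξ, hξ, ?_⟩
  rw [hslope, div_mul_cancel₀ _ (sub_ne_zero.2 hlt.ne')]

theorem HasDerivWithinAt.exists_ball_pos_mul_sub {g : ℝ → ℝ} {c : ℝ}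
    (hg : HasDerivWithinAt g c s x₀) (hgx₀ : g x₀ = 0) (hc : 0 < c) :
    ∃ ε > 0, ∀ z ∈ Metric.ball x₀ ε ∩ (s \ {x₀}), 0 < g z * (z - x₀) := by
  have hev := (hasDerivWithinAt_iff_tendsto_slope.1 hg).eventually (eventually_gt_nhds hc)
  obtain ⟨ε, hε, hball⟩ := Metric.mem_nhdsWithin_iff.1 hev
  refine ⟨ε, hε, fun z hz => ?_⟩
  have hne : z - x₀ ≠ 0 := sub_ne_zero.2 hz.2.2
  have hslope : 0 < g z / (z - x₀) := by simpa [slope_def_field, hgx₀] using hball hz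
  calc 0 < g z / (z - x₀) * (z - x₀) ^ 2 := mul_pos hslope (by positivity)
    _ = g z * (z - x₀) := by field_simp

theorem IsMaxOn.hasDerivWithinAt_derivWithin_nonpos {f'' : ℝ} (hs : Convex ℝ s)
    (hf : DifferentiableOn ℝ f s) (hmax : IsMaxOn f s x₀) (hx₀ : x₀ ∈ s) (hacc : AccPt x₀ (𝓟 s))
    (hd : derivWithin f s x₀ = 0) (hf'' : HasDerivWithinAt (derivWithin f s) f'' s x₀) :
    f'' ≤ 0 := by
  by_contra! hpos
  obtain ⟨ε, hε, hsign⟩ := hf''.exists_ball_pos_mul_sub hd hpos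
  have : (𝓝[s \ {x₀}] x₀).NeBot := accPt_principal_iff_nhdsWithin.1 hacc
  obtain ⟨y, hys, hyε⟩ :=
    Filter.nonempty_of_mem (inter_mem_nhdsWithin (s \ {x₀}) (Metric.ball_mem_nhds x₀ hε))
  have hfy : f y ≤ f x₀ := hmax hys.1
  have hsub : uIcc x₀ y ⊆ Metric.ball x₀ ε ∩ s :=
    (convex_iff_ordConnected.1 ((convex_ball x₀ ε).inter hs)).uIcc_subset
      ⟨Metric.mem_ball_self hε, hx₀⟩ ⟨hyε, hys.1⟩
  have hsign' : ∀ ξ ∈ uIcc x₀ y, ξ ≠ x₀ → 0 < derivWithin f s ξ * (ξ - x₀) :=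
    fun ξ hξ hne => hsign ξ ⟨(hsub hξ).1, (hsub hξ).2, hne⟩
  rcases (show y ≠ x₀ from hys.2).lt_or_gt with hlt | hlt
  · obtain ⟨ξ, hξ, heq⟩ := hs.exists_mem_Ioo_sub_eq_derivWithin_mul hf hys.1 hx₀ hlt
    have := hsign' ξ (Icc_subset_uIcc' (Ioo_subset_Icc_self hξ)) hξ.2.ne
    nlinarith [hξ.1, hξ.2]
  · obtain ⟨ξ, hξ, heq⟩ := hs.exists_mem_Ioo_sub_eq_derivWithin_mul hf hx₀ hys.1 hlt
    have := hsign' ξ (Icc_subset_uIcc (Ioo_subset_Icc_self hξ)) hξ.1.ne'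
    nlinarith [hξ.1, hξ.2]

variable {c d : ℝ}

theorem IsMaxOn.derivWithin_Icc_eq_zero (hmax : IsMaxOn f (Icc c d) x₀) (hx₀ : x₀ ∈ Icc c d)
    (hleft : x₀ = c → 0 ≤ derivWithin f (Icc c d) x₀)
    (hright : x₀ = d → derivWithin f (Icc c d) x₀ ≤ 0) :
    derivWithin f (Icc c d) x₀ = 0 := by
  have hfirst {y} (hy : y ∈ Icc c d) := hmax.derivWithin_mul_sub_nonpos (convex_Icc c d) hx₀ hy
  refine le_antisymm ?_ ?_
  · rcases hx₀.2.eq_or_lt with h | h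
    · exact hright h
    · nlinarith [hfirst (right_mem_Icc.2 (hx₀.1.trans h.le))]
  · rcases hx₀.1.eq_or_lt with h | h
    · exact hleft h.symm
    · nlinarith [hfirst (left_mem_Icc.2 (h.le.trans hx₀.2))]

theorem IsMaxOn.derivWithin_derivWithin_Icc_nonpos (hcd : c < d)
    (hf : ContDiffOn ℝ 2 f (Icc c d)) (hmax : IsMaxOn f (Icc c d) x₀) (hx₀ : x₀ ∈ Icc c d)
    (hd : derivWithin f (Icc c d) x₀ = 0) :
    derivWithin (derivWithin f (Icc c d)) (Icc c d) x₀ ≤ 0 := by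
  have hf' : ContDiffOn ℝ 1 (derivWithin f (Icc c d)) (Icc c d) :=
    hf.derivWithin (uniqueDiffOn_Icc hcd) (by norm_num)
  exact hmax.hasDerivWithinAt_derivWithin_nonpos (convex_Icc c d)
    (hf.differentiableOn (by norm_num)) hx₀ (uniqueDiffOn_Icc hcd x₀ hx₀).accPt hd
    (hf'.differentiableOn one_ne_zero x₀ hx₀).hasDerivWithinAt

end

/-- Maximum principle for the one-dimensional operator with transmission conditions. -/
theorem maximum_principle_transmission_1D
    (a b κ α β : ℝ) (ha : a < 0) (hb : 0 < b) (hκ : 0 < κ)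
    (hα : 0 ≤ α) (hβ : 0 ≤ β)
    (fm fp : ℝ → ℝ)
    (hfm : ContDiffOn ℝ 2 fm (Icc a 0)) (hfp : ContDiffOn ℝ 2 fp (Icc 0 b))
    (hbc1 : dIcc a 0 fm a = 0) (hbc2 : dIcc 0 b fp b = 0)
    (htrp : dIcc 0 b fp 0 = α * (fp 0 - fm 0))
    (htrm : dIcc a 0 fm 0 = β * (fp 0 - fm 0))
    (M : ℝ) (hM : M = max (sSup (fm '' Icc a 0)) (sSup (fp '' Icc 0 b))) :
    (∀ x₀ ∈ Icc a 0, fm x₀ = M → κ * d2Icc a 0 fm x₀ ≤ 0) ∧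
    (∀ x₀ ∈ Icc 0 b, fp x₀ = M → d2Icc 0 b fp x₀ ≤ 0) := by
  have hfmM : ∀ x ∈ Icc a 0, fm x ≤ M := fun x hx =>
    hM ▸ (hfm.continuousOn.le_sSup_image_Icc hx).trans (le_max_left _ _)
  have hfpM : ∀ x ∈ Icc 0 b, fp x ≤ M := fun x hx =>
    hM ▸ (hfp.continuousOn.le_sSup_image_Icc hx).trans (le_max_right _ _)
  refine ⟨fun x₀ hx₀ hx₀M => ?_, fun x₀ hx₀ hx₀M => ?_⟩
  · have hmax : IsMaxOn fm (Icc a 0) x₀ := fun x hx => hx₀M ▸ hfmM x hx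
    have hd := hmax.derivWithin_Icc_eq_zero hx₀ (fun h => h ▸ hbc1.ge) fun h => by
      subst h
      exact htrm.trans_le <|
        mul_nonpos_of_nonneg_of_nonpos hβ (by linarith [hfpM 0 ⟨le_rfl, hb.le⟩])
    exact mul_nonpos_of_nonneg_of_nonpos hκ.le <|
      hmax.derivWithin_derivWithin_Icc_nonpos ha hfm hx₀ hd
  · have hmax : IsMaxOn fp (Icc 0 b) x₀ := fun x hx => hx₀M ▸ hfpM x hx
    have hd := hmax.derivWithin_Icc_eq_zero hx₀ (fun h => by
      subst h
      exact (mul_nonneg hα (by linarith [hfmM 0 ⟨ha.le, le_rfl⟩])).trans_eq htrp.symm)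
      fun h => h ▸ hbc2.le
    exact hmax.derivWithin_derivWithin_Icc_nonpos hb hfp hx₀ hd
end

section
/- Range condition for the one-dimensional operator with transmission conditions: for every λ > 0 and all continuous functions g₋ : [a,0] → ℝ and g₊ : [0,b] → ℝ, there exist functions f₋ : [a,0] → ℝ and f₊ : [0,b] → ℝ, each twice continuously differentiable on its interval (one-sided derivatives at the endpoints), such that λ f₋(x) − κ f₋''(x) = g₋(x) for all x ∈ [a,0], λ f₊(x) − f₊''(x) = g₊(x) for all x ∈ [0,b], and the boundary and transmission conditions hold: f₋'(a) = 0, f₊'(b) = 0, f₊'(0) = α (f₊(0) − f₋(0)), f₋'(0) = β (f₊(0) − f₋(0)). -/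
open Set

/-!
Extend `g₋`, `g₊` continuously to `ℝ` and solve on the whole line. On each side, variation of
parameters gives a solution with vanishing derivative at the outer endpoint `c`, and
`cosh (μ (x - c))` with `μ² = λ / κ` spans the homogeneous solutions with that Neumann condition.
The transmission conditions are then a `2 × 2` linear system for the coefficients of the two
`cosh` modes; its determinant is positive because the modes are positive, their derivatives at
`0` point away from the outer endpoints, and `α, β ≥ 0`.
-/

open Real intervalIntegral

lemma ContinuousOn.exists_continuous_eqOn_Icc {lo hi : ℝ} {g : ℝ → ℝ}
    (hg : ContinuousOn g (Icc lo hi)) (h : lo ≤ hi) :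
    ∃ G : ℝ → ℝ, Continuous G ∧ EqOn G g (Icc lo hi) :=
  ⟨IccExtend h ((Icc lo hi).domRestrict g), continuous_IccExtend_iff.2 hg.domRestrict,
    fun _ hx => IccExtend_of_mem h _ hx⟩

lemma dIcc_eq_deriv {lo hi x : ℝ} {f : ℝ → ℝ} (h : lo < hi) (hf : DifferentiableAt ℝ f x)
    (hx : x ∈ Icc lo hi) : dIcc lo hi f x = deriv f x :=
  hf.derivWithin (uniqueDiffOn_Icc h x hx)

lemma d2Icc_eq_deriv_deriv {lo hi x : ℝ} {f : ℝ → ℝ} (h : lo < hi) (hf : ContDiff ℝ 2 f)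
    (hx : x ∈ Icc lo hi) : d2Icc lo hi f x = deriv (deriv f) x := by
  have hEq : EqOn (derivWithin f (Icc lo hi)) (deriv f) (Icc lo hi) := fun y hy =>
    dIcc_eq_deriv h (hf.differentiable (by norm_num) y) hy
  rw [d2Icc, derivWithin_congr hEq (hEq hx)]
  exact dIcc_eq_deriv h (hf.differentiable_deriv_two x) hx

lemma contDiff_two_of_hasDerivAt {f f' f'' : ℝ → ℝ} (hf : ∀ x, HasDerivAt f (f' x) x)
    (hf' : ∀ x, HasDerivAt f' (f'' x) x) (hf'' : Continuous f'') : ContDiff ℝ 2 f := by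
  rw [show (2 : WithTop ℕ∞) = 1 + 1 from rfl, contDiff_succ_iff_deriv,
    funext fun x => (hf x).deriv, contDiff_one_iff_deriv, funext fun x => (hf' x).deriv]
  exact ⟨fun x => (hf x).differentiableAt, by simp, fun x => (hf' x).differentiableAt, hf''⟩

lemma deriv_add_smul {u φ : ℝ → ℝ} (hu : Differentiable ℝ u) (hφ : Differentiable ℝ φ) (A : ℝ) :
    deriv (u + A • φ) = deriv u + A • deriv φ :=
  funext fun x => by
    simp only [Pi.add_apply, Pi.smul_apply]
    rw [deriv_add (hu x) ((hφ x).const_smul A), deriv_const_smul _ (hφ x)]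

lemma hasDerivAt_cosh_mul_sub (μ c x : ℝ) :
    HasDerivAt (fun y => cosh (μ * (y - c))) (μ * sinh (μ * (x - c))) x := by
  simpa [mul_comm] using ((hasDerivAt_id x).sub_const c).const_mul μ |>.cosh

lemma hasDerivAt_sinh_mul_sub (μ c x : ℝ) :
    HasDerivAt (fun y => sinh (μ * (y - c))) (μ * cosh (μ * (x - c))) x := by
  simpa [mul_comm] using ((hasDerivAt_id x).sub_const c).const_mul μ |>.sinh

/-- Variation of parameters: `P x = ∫_c^x sinh (μ (x - t)) h t dt / μ`, expanded by the addition
formula for `sinh` so that the integrands do not depend on `x`. -/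
theorem exists_hasDerivAt_sq_mul_add {μ : ℝ} (hμ : μ ≠ 0) {h : ℝ → ℝ} (hh : Continuous h)
    (c : ℝ) : ∃ P Q : ℝ → ℝ, (∀ x, HasDerivAt P (Q x) x) ∧
      (∀ x, HasDerivAt Q (μ ^ 2 * P x + h x) x) ∧ Q c = 0 := by
  set G₁ : ℝ → ℝ := fun x => ∫ t in c..x, cosh (μ * (t - c)) * h t
  set G₂ : ℝ → ℝ := fun x => ∫ t in c..x, sinh (μ * (t - c)) * h t
  have hG₁ (x : ℝ) : HasDerivAt G₁ (cosh (μ * (x - c)) * h x) x :=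
    ((continuous_cosh.comp (by fun_prop)).mul hh).integral_hasStrictDerivAt c x |>.hasDerivAt
  have hG₂ (x : ℝ) : HasDerivAt G₂ (sinh (μ * (x - c)) * h x) x :=
    ((continuous_sinh.comp (by fun_prop)).mul hh).integral_hasStrictDerivAt c x |>.hasDerivAt
  refine ⟨fun x => (sinh (μ * (x - c)) * G₁ x - cosh (μ * (x - c)) * G₂ x) / μ,
    fun x => cosh (μ * (x - c)) * G₁ x - sinh (μ * (x - c)) * G₂ x,
    fun x => ?_, fun x => ?_, by simp [G₁, G₂]⟩
  · refine ((((hasDerivAt_sinh_mul_sub μ c x).mul (hG₁ x)).sub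
      ((hasDerivAt_cosh_mul_sub μ c x).mul (hG₂ x))).div_const μ).congr_deriv ?_
    field_simp
    ring
  · refine (((hasDerivAt_cosh_mul_sub μ c x).mul (hG₁ x)).sub
      ((hasDerivAt_sinh_mul_sub μ c x).mul (hG₂ x))).congr_deriv ?_
    field_simp
    linear_combination h x * cosh_sq_sub_sinh_sq (μ * (x - c))

lemma mul_sqrt_div_sq {lam κ : ℝ} (hκ : 0 < κ) (hlam : 0 ≤ lam) : κ * √(lam / κ) ^ 2 = lam := by
  rw [sq_sqrt (div_nonneg hlam hκ.le)]
  field_simp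

section IsSolution

variable {lam κ : ℝ}

def IsSolution (lam κ : ℝ) (g f : ℝ → ℝ) : Prop :=
  ContDiff ℝ 2 f ∧ ∀ x, lam * f x - κ * deriv (deriv f) x = g x

lemma IsSolution.differentiable {g f : ℝ → ℝ} (hf : IsSolution lam κ g f) :
    Differentiable ℝ f :=
  hf.1.differentiable (by norm_num)

lemma IsSolution.add_smul {g u φ : ℝ → ℝ} (hu : IsSolution lam κ g u)
    (hφ : IsSolution lam κ 0 φ) (A : ℝ) : IsSolution lam κ g (u + A • φ) := by
  refine ⟨hu.1.add (hφ.1.const_smul A), fun x => ?_⟩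
  rw [deriv_add_smul hu.differentiable hφ.differentiable,
    deriv_add_smul hu.1.differentiable_deriv_two hφ.1.differentiable_deriv_two]
  have hφx : lam * φ x - κ * deriv (deriv φ) x = 0 := hφ.2 x
  simp only [Pi.add_apply, Pi.smul_apply, smul_eq_mul]
  linear_combination hu.2 x + A * hφx

theorem exists_isSolution_deriv_eq_zero (hκ : 0 < κ) (hlam : 0 < lam) {g : ℝ → ℝ}
    (hg : Continuous g) (c : ℝ) : ∃ u, IsSolution lam κ g u ∧ deriv u c = 0 := by
  set μ := √(lam / κ)
  have hμ : κ * μ ^ 2 = lam := mul_sqrt_div_sq hκ hlam.le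
  obtain ⟨P, Q, hP, hQ, hQc⟩ := exists_hasDerivAt_sq_mul_add (μ := μ)
    (sqrt_pos.2 (div_pos hlam hκ)).ne' (h := fun x => -g x / κ) (by fun_prop) c
  have hP' : deriv P = Q := funext fun x => (hP x).deriv
  refine ⟨P, ⟨contDiff_two_of_hasDerivAt hP hQ ?_, fun x => ?_⟩, hP' ▸ hQc⟩
  · have hPc : Continuous P := continuous_iff_continuousAt.2 fun x => (hP x).continuousAt
    fun_prop
  · rw [hP', (hQ x).deriv, mul_add, mul_div_cancel₀ _ hκ.ne']
    linear_combination -P x * hμ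

theorem exists_isSolution_zero_deriv_eq_zero (hκ : 0 < κ) (hlam : 0 < lam) (c : ℝ) :
    ∃ φ, IsSolution lam κ 0 φ ∧ deriv φ c = 0 ∧ (∀ x, 0 < φ x) ∧
      (∀ x, c < x → 0 < deriv φ x) ∧ ∀ x, x < c → deriv φ x < 0 := by
  set μ := √(lam / κ)
  have hμ₀ : 0 < μ := sqrt_pos.2 (div_pos hlam hκ)
  have hμ : κ * μ ^ 2 = lam := mul_sqrt_div_sq hκ hlam.le
  have hφ' : deriv (fun x => cosh (μ * (x - c))) = fun x => μ * sinh (μ * (x - c)) :=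
    funext fun x => (hasDerivAt_cosh_mul_sub μ c x).deriv
  have hφ'' : deriv (fun x => μ * sinh (μ * (x - c))) = fun x => μ * (μ * cosh (μ * (x - c))) :=
    funext fun x => ((hasDerivAt_sinh_mul_sub μ c x).const_mul μ).deriv
  refine ⟨fun x => cosh (μ * (x - c)), ⟨by fun_prop, fun x => ?_⟩, by simp [hφ'],
    fun x => cosh_pos _, fun x hx => ?_, fun x hx => ?_⟩
  · rw [hφ', hφ'', Pi.zero_apply]
    linear_combination -cosh (μ * (x - c)) * hμ
  · rw [hφ']
    exact mul_pos hμ₀ (sinh_pos_iff.2 (mul_pos hμ₀ (sub_pos.2 hx)))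
  · rw [hφ']
    exact mul_neg_of_pos_of_neg hμ₀ (sinh_neg_iff.2 (mul_neg_of_pos_of_neg hμ₀ (sub_neg.2 hx)))

end IsSolution

lemma exists_transmission_coeffs {α β φ φ' ψ ψ' : ℝ} (hα : 0 ≤ α) (hβ : 0 ≤ β) (hφ : 0 < φ)
    (hφ' : 0 < φ') (hψ : 0 < ψ) (hψ' : ψ' < 0) (u u' v v' : ℝ) :
    ∃ A B : ℝ, v' + B * ψ' = α * ((v + B * ψ) - (u + A * φ)) ∧
      u' + A * φ' = β * ((v + B * ψ) - (u + A * φ)) := by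
  set D := -ψ' * φ' - β * φ * ψ' + α * ψ * φ'
  have hD : D ≠ 0 := by
    refine ne_of_gt ?_
    have := mul_pos (neg_pos.2 hψ') hφ'
    have := mul_nonneg (mul_nonneg hβ hφ.le) (neg_pos.2 hψ').le
    have := mul_nonneg (mul_nonneg hα hψ.le) hφ'.le
    linarith
  set r₁ := α * (v - u) - v'
  set r₂ := β * (v - u) - u'
  refine ⟨(-β * ψ * r₁ - (ψ' - α * ψ) * r₂) / D, (α * φ * r₂ - (φ' + β * φ) * r₁) / D, ?_, ?_⟩ <;>
  · field_simp
    ring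

/-- Range condition for the one-dimensional operator with transmission conditions. -/
theorem range_condition_transmission_1D
    (a b κ α β lam : ℝ) (ha : a < 0) (hb : 0 < b) (hκ : 0 < κ)
    (hα : 0 ≤ α) (hβ : 0 ≤ β) (hlam : 0 < lam)
    (gm gp : ℝ → ℝ)
    (hgm : ContinuousOn gm (Icc a 0)) (hgp : ContinuousOn gp (Icc 0 b)) :
    ∃ fm fp : ℝ → ℝ,
      ContDiffOn ℝ 2 fm (Icc a 0) ∧ ContDiffOn ℝ 2 fp (Icc 0 b) ∧
      (∀ x ∈ Icc a 0, lam * fm x - κ * d2Icc a 0 fm x = gm x) ∧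
      (∀ x ∈ Icc 0 b, lam * fp x - d2Icc 0 b fp x = gp x) ∧
      dIcc a 0 fm a = 0 ∧ dIcc 0 b fp b = 0 ∧
      dIcc 0 b fp 0 = α * (fp 0 - fm 0) ∧
      dIcc a 0 fm 0 = β * (fp 0 - fm 0) := by
  obtain ⟨Gm, hGm, hGm_eq⟩ := hgm.exists_continuous_eqOn_Icc ha.le
  obtain ⟨Gp, hGp, hGp_eq⟩ := hgp.exists_continuous_eqOn_Icc hb.le
  obtain ⟨um, hum, hum_a⟩ := exists_isSolution_deriv_eq_zero hκ hlam hGm a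
  obtain ⟨up, hup, hup_b⟩ := exists_isSolution_deriv_eq_zero one_pos hlam hGp b
  obtain ⟨φm, hφm, hφm_a, hφm_pos, hφm_right, -⟩ := exists_isSolution_zero_deriv_eq_zero hκ hlam a
  obtain ⟨φp, hφp, hφp_b, hφp_pos, -, hφp_left⟩ :=
    exists_isSolution_zero_deriv_eq_zero one_pos hlam b
  obtain ⟨A, B, hB0, hA0⟩ := exists_transmission_coeffs hα hβ (hφm_pos 0) (hφm_right 0 ha)
    (hφp_pos 0) (hφp_left 0 hb) (um 0) (deriv um 0) (up 0) (deriv up 0)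
  have hfm := hum.add_smul hφm A
  have hfp := hup.add_smul hφp B
  have hfm' := deriv_add_smul hum.differentiable hφm.differentiable A
  have hfp' := deriv_add_smul hup.differentiable hφp.differentiable B
  have hdm (x : ℝ) (hx : x ∈ Icc a 0) := dIcc_eq_deriv ha (hfm.differentiable x) hx
  have hdp (x : ℝ) (hx : x ∈ Icc 0 b) := dIcc_eq_deriv hb (hfp.differentiable x) hx
  refine ⟨um + A • φm, up + B • φp, hfm.1.contDiffOn, hfp.1.contDiffOn, fun x hx => ?_,
    fun x hx => ?_, ?_, ?_, ?_, ?_⟩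
  · rw [d2Icc_eq_deriv_deriv ha hfm.1 hx, hfm.2 x, hGm_eq hx]
  · rw [d2Icc_eq_deriv_deriv hb hfp.1 hx, ← hGp_eq hx, ← hfp.2 x, one_mul]
  · simp [hdm a (left_mem_Icc.2 ha.le), hfm', hum_a, hφm_a]
  · simp [hdp b (right_mem_Icc.2 hb.le), hfp', hup_b, hφp_b]
  · simpa [hdp 0 (left_mem_Icc.2 hb.le), hfp'] using hB0
  · simpa [hdm 0 (right_mem_Icc.2 ha.le), hfm'] using hA0
end

section
/- Maximum principle for the two-dimensional operator with transmission conditions: suppose (u₋, u₊) belongs to D(𝒜) and let M = max( sup_{[r,1]×ℝ} u₋, sup_{[1,R]×ℝ} u₊ ). If (ρ₀, φ₀) ∈ [r,1] × ℝ and u₋(ρ₀, φ₀) = M, then κ ( ∂²u₋/∂ρ²(ρ₀,φ₀) + ρ₀⁻¹ ∂u₋/∂ρ(ρ₀,φ₀) + ρ₀⁻² ∂²u₋/∂φ²(ρ₀,φ₀) ) ≤ 0; and if (ρ₀, φ₀) ∈ [1,R] × ℝ and u₊(ρ₀, φ₀) = M, then ∂²u₊/∂ρ²(ρ₀,φ₀)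 + ρ₀⁻¹ ∂u₊/∂ρ(ρ₀,φ₀) + ρ₀⁻² ∂²u₊/∂φ²(ρ₀,φ₀) ≤ 0. -/
/-!
At a point where one side attains the common maximum `M`, both sections through it attain their
maximum there. The angular section, maximal on all of `ℝ`, has nonpositive second derivative.
The one-sided radial derivative vanishes: in the interior by Fermat, and on the circles
`ρ = r, 1, R` because a boundary maximum forces one sign on it while the Neumann and transmission
conditions force the other; at `ρ = 1` the jump `u₊ - u₋` is `≤ 0` where `u₋` is maximal and
`≥ 0` where `u₊` is, and `α, β ≥ 0`. A maximum with vanishing first derivative has nonpositive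
second derivative, also one-sidedly, by the mean value theorem; the weights `κ` and `ρ⁻²` are
nonnegative. Periodicity and compactness make `M` a genuine supremum.
-/

open Set Filter

/-- Partial derivative in the radial variable (one-sided on `[a,b]`). -/
noncomputable def pdR (a b : ℝ) (u : ℝ → ℝ → ℝ) (ρ φ : ℝ) : ℝ :=
  derivWithin (fun s => u s φ) (Set.Icc a b) ρ

/-- Second partial derivative in the radial variable (one-sided on `[a,b]`). -/
noncomputable def pdRR (a b : ℝ) (u : ℝ → ℝ → ℝ) (ρ φ : ℝ) : ℝ :=
  derivWithin (fun s => pdR a b u s φ) (Set.Icc a b) ρ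

/-- Second partial derivative in the angular variable. -/
noncomputable def pdPP (u : ℝ → ℝ → ℝ) (ρ φ : ℝ) : ℝ :=
  deriv (deriv (u ρ)) φ

section SecondDerivativeTest

variable {s : Set ℝ} {g : ℝ → ℝ} {x y : ℝ}

theorem IsMaxOn.sub_mul_derivWithin_nonpos (hs : Convex ℝ s) (hmax : IsMaxOn g s x)
    (hx : x ∈ s) (hy : y ∈ s) : (y - x) * derivWithin g s x ≤ 0 := by
  by_cases hg : DifferentiableWithinAt ℝ g s x
  · simpa [mul_comm] using hmax.localize.hasFDerivWithinAt_nonpos hg.hasDerivWithinAt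
      (sub_mem_posTangentConeAt_of_segment_subset (hs.segment_subset hx hy))
  · simp [derivWithin_zero_of_not_differentiableWithinAt hg]

theorem IsMaxOn.derivWithin_Icc_eq_zero_s4 {a b : ℝ} (hmax : IsMaxOn g (Icc a b) x)
    (hx : x ∈ Icc a b) (hleft : x = a → 0 ≤ derivWithin g (Icc a b) x)
    (hright : x = b → derivWithin g (Icc a b) x ≤ 0) :
    derivWithin g (Icc a b) x = 0 := by
  refine le_antisymm ?_ ?_
  · rcases hx.2.lt_or_eq with hxb | rfl
    · exact nonpos_of_mul_nonpos_right
        (hmax.sub_mul_derivWithin_nonpos (convex_Icc a b) hx ⟨hx.1.trans hxb.le, le_rfl⟩)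
        (sub_pos.2 hxb)
    · exact hright rfl
  · rcases hx.1.lt_or_eq with hax | rfl
    · exact nonneg_of_mul_nonpos_right
        (hmax.sub_mul_derivWithin_nonpos (convex_Icc a b) hx ⟨le_rfl, hax.le.trans hx.2⟩)
        (sub_neg.2 hax)
    · exact hleft rfl

theorem Convex.exists_derivWithin_eq_slope (hs : Convex ℝ s) (hg : DifferentiableOn ℝ g s)
    (hx : x ∈ s) (hy : y ∈ s) (hxy : x ≠ y) :
    ∃ t ∈ uIoo x y, derivWithin g s t = slope g x y := by
  wlog hlt : x < y generalizing x y
  · rw [uIoo_comm, slope_comm]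
    exact this hy hx hxy.symm (hxy.symm.lt_of_le (not_lt.1 hlt))
  have hIcc : Icc x y ⊆ s := hs.ordConnected.out hx hy
  obtain ⟨t, ht, hgt⟩ := exists_hasDerivAt_eq_slope g (derivWithin g s) hlt
    (hg.continuousOn.mono hIcc) fun t ht =>
      (hg t (hIcc (Ioo_subset_Icc_self ht))).hasDerivWithinAt.hasDerivAt
        (mem_of_superset (Ioo_mem_nhds ht.1 ht.2) (Ioo_subset_Icc_self.trans hIcc))
  exact ⟨t, Ioo_subset_uIoo ht, by rw [hgt, slope_def_field]⟩

theorem sub_mul_sub_pos_of_mem_uIoo {t u : ℝ} (ht : t ∈ uIoo x u) : 0 < (t - x) * (u - x) := by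
  rw [uIoo_eq_union] at ht
  rcases ht with ⟨h₁, h₂⟩ | ⟨h₁, h₂⟩ <;> nlinarith

theorem IsMaxOn.derivWithin_derivWithin_nonpos (hs : Convex ℝ s) (hg : DifferentiableOn ℝ g s)
    (hmax : IsMaxOn g s x) (hx : x ∈ s) (hd : derivWithin g s x = 0) :
    derivWithin (derivWithin g s) s x ≤ 0 := by
  -- If `g''(x) > 0`, then near `x` the derivative `g'` has the sign of `t - x`; the mean value
  -- theorem between `x` and a nearby `u ∈ s` then gives `g u > g x`.
  by_contra! hpos
  have hacc : AccPt x (𝓟 s) := by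
    by_contra h
    exact hpos.ne' (derivWithin_zero_of_not_accPt h)
  have hslope := hasDerivWithinAt_iff_tendsto_slope.1
    (differentiableWithinAt_of_derivWithin_ne_zero hpos.ne').hasDerivWithinAt
  obtain ⟨δ, hδ, hsign⟩ :
      ∃ δ > 0, ∀ ⦃t⦄, dist t x < δ → t ∈ s \ {x} → 0 < slope (derivWithin g s) x t :=
    Metric.eventually_nhds_iff.1 (eventually_nhdsWithin_iff.1
      (hslope.eventually (eventually_gt_nhds hpos)))
  obtain ⟨u, ⟨hux, hu⟩, hδu⟩ : ∃ u, (u ≠ x ∧ u ∈ s) ∧ u ∈ Metric.ball x δ :=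
    ((accPt_iff_frequently.1 hacc).and_eventually (Metric.ball_mem_nhds x hδ)).exists
  obtain ⟨t, ht, hgt⟩ := hs.exists_derivWithin_eq_slope hg hx hu hux.symm
  have hts : t ∈ s := hs.ordConnected.uIcc_subset hx hu (uIoo_subset_uIcc_self ht)
  have htδ : t ∈ Metric.ball x δ := (convex_ball x δ).ordConnected.uIcc_subset
    (Metric.mem_ball_self hδ) hδu (uIoo_subset_uIcc_self ht)
  have hsub := sub_mul_sub_pos_of_mem_uIoo ht
  have htx : t ≠ x := by rintro rfl; simp at hsub
  have hslope_t := hsign htδ ⟨hts, htx⟩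
  rw [slope_def_field, hd, sub_zero] at hslope_t
  have hpos_t : 0 < derivWithin g s t * (u - x) := by
    have : derivWithin g s t * (u - x) =
        derivWithin g s t / (t - x) * ((t - x) * (u - x)) := by
      field_simp [sub_ne_zero.2 htx]
    rw [this]
    exact mul_pos hslope_t hsub
  have hmvt : derivWithin g s t * (u - x) = g u - g x := by
    rw [hgt, slope_def_field]
    field_simp [sub_ne_zero.2 hux]
  linarith [isMaxOn_iff.1 hmax u hu]

theorem IsMaxOn.deriv_deriv_nonpos (hg : Differentiable ℝ g) (hmax : IsMaxOn g univ x) :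
    deriv (deriv g) x ≤ 0 := by
  have hd : deriv g x = 0 := (hmax.isLocalMax univ_mem).deriv_eq_zero
  simpa only [derivWithin_univ] using hmax.derivWithin_derivWithin_nonpos convex_univ
    hg.differentiableOn (mem_univ x) (by rwa [derivWithin_univ])

end SecondDerivativeTest

theorem bddAbove_image_prod_univ_of_periodic {α : Type*} [TopologicalSpace α] {K : Set α}
    (hK : IsCompact K) {u : α → ℝ → ℝ} {T : ℝ} (hT : 0 < T)
    (hu : ContinuousOn (fun p : α × ℝ => u p.1 p.2) (K ×ˢ univ))
    (hper : ∀ x, Function.Periodic (u x) T) :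
    BddAbove ((fun p : α × ℝ => u p.1 p.2) '' (K ×ˢ univ)) := by
  refine ((hK.prod isCompact_Icc).bddAbove_image
    (hu.mono (prod_mono_right (subset_univ (Icc 0 T))))).mono ?_
  rintro _ ⟨⟨x, φ⟩, ⟨hx, -⟩, rfl⟩
  obtain ⟨ψ, hψ, hφψ⟩ := (hper x).exists_mem_Ico₀ hT φ
  exact ⟨(x, ψ), ⟨hx, Ico_subset_Icc_self hψ⟩, hφψ.symm⟩

noncomputable def polarLaplacian (a b : ℝ) (u : ℝ → ℝ → ℝ) (ρ φ : ℝ) : ℝ :=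
  pdRR a b u ρ φ + ρ⁻¹ * pdR a b u ρ φ + (ρ ^ 2)⁻¹ * pdPP u ρ φ

theorem polarLaplacian_nonpos_of_isMaxOn {a b ρ₀ φ₀ : ℝ} {u : ℝ → ℝ → ℝ}
    (hu : DifferentiableOn ℝ (fun p : ℝ × ℝ => u p.1 p.2) (Icc a b ×ˢ univ))
    (hmax : IsMaxOn (fun p : ℝ × ℝ => u p.1 p.2) (Icc a b ×ˢ univ) (ρ₀, φ₀))
    (hρ₀ : ρ₀ ∈ Icc a b) (hleft : ρ₀ = a → 0 ≤ pdR a b u ρ₀ φ₀)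
    (hright : ρ₀ = b → pdR a b u ρ₀ φ₀ ≤ 0) :
    polarLaplacian a b u ρ₀ φ₀ ≤ 0 := by
  have hradial : IsMaxOn (fun ρ => u ρ φ₀) (Icc a b) ρ₀ :=
    hmax.comp_mapsTo (g := (·, φ₀)) (fun _ hρ => ⟨hρ, mem_univ φ₀⟩) rfl
  have hangular : IsMaxOn (u ρ₀) univ φ₀ :=
    hmax.comp_mapsTo (g := (ρ₀, ·)) (fun φ _ => ⟨hρ₀, mem_univ φ⟩) rfl
  have hd : pdR a b u ρ₀ φ₀ = 0 := hradial.derivWithin_Icc_eq_zero_s4 hρ₀ hleft hright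
  have hrr : pdRR a b u ρ₀ φ₀ ≤ 0 := hradial.derivWithin_derivWithin_nonpos (convex_Icc a b)
    (hu.comp (differentiableOn_id.prodMk (differentiableOn_const φ₀))
      fun ρ hρ => ⟨hρ, mem_univ φ₀⟩) hρ₀ hd
  have hpp : pdPP u ρ₀ φ₀ ≤ 0 := hangular.deriv_deriv_nonpos <| differentiableOn_univ.1 <|
    hu.comp ((differentiableOn_const ρ₀).prodMk differentiableOn_id) fun φ _ => ⟨hρ₀, mem_univ φ⟩
  rw [polarLaplacian, hd, mul_zero, add_zero]
  exact add_nonpos hrr (mul_nonpos_of_nonneg_of_nonpos (by positivity) hpp)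

theorem maximum_principle_transmission_2D_general
    (r R κ α β : ℝ) (hr1 : r < 1) (hR : 1 < R) (hκ : 0 < κ)
    (hα : 0 ≤ α) (hβ : 0 ≤ β)
    (um up : ℝ → ℝ → ℝ)
    (hum : ContDiffOn ℝ 2 (fun p : ℝ × ℝ => um p.1 p.2) (Icc r 1 ×ˢ (univ : Set ℝ)))
    (hup : ContDiffOn ℝ 2 (fun p : ℝ × ℝ => up p.1 p.2) (Icc 1 R ×ˢ (univ : Set ℝ)))
    (humper : ∀ ρ φ, um ρ (φ + 2 * Real.pi) = um ρ φ)
    (hupper : ∀ ρ φ, up ρ (φ + 2 * Real.pi) = up ρ φ)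
    (hbcm : ∀ φ : ℝ, pdR r 1 um r φ = 0)
    (hbcp : ∀ φ : ℝ, pdR 1 R up R φ = 0)
    (htrp : ∀ φ : ℝ, pdR 1 R up 1 φ = α * (up 1 φ - um 1 φ))
    (htrm : ∀ φ : ℝ, pdR r 1 um 1 φ = β * (up 1 φ - um 1 φ))
    (M : ℝ)
    (hM : M = max
        (sSup ((fun p : ℝ × ℝ => um p.1 p.2) '' (Icc r 1 ×ˢ (univ : Set ℝ))))
        (sSup ((fun p : ℝ × ℝ => up p.1 p.2) '' (Icc 1 R ×ˢ (univ : Set ℝ))))) :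
    (∀ ρ₀ φ₀ : ℝ, ρ₀ ∈ Icc r 1 → um ρ₀ φ₀ = M →
      κ * (pdRR r 1 um ρ₀ φ₀ + ρ₀⁻¹ * pdR r 1 um ρ₀ φ₀
            + (ρ₀ ^ 2)⁻¹ * pdPP um ρ₀ φ₀) ≤ 0) ∧
    (∀ ρ₀ φ₀ : ℝ, ρ₀ ∈ Icc 1 R → up ρ₀ φ₀ = M →
      pdRR 1 R up ρ₀ φ₀ + ρ₀⁻¹ * pdR 1 R up ρ₀ φ₀
        + (ρ₀ ^ 2)⁻¹ * pdPP up ρ₀ φ₀ ≤ 0) := by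
  have hMm : ∀ p ∈ Icc r 1 ×ˢ univ, um p.1 p.2 ≤ M := fun p hp => hM ▸
    (le_csSup (bddAbove_image_prod_univ_of_periodic isCompact_Icc Real.two_pi_pos
      hum.continuousOn humper) (mem_image_of_mem _ hp)).trans (le_max_left _ _)
  have hMp : ∀ p ∈ Icc 1 R ×ˢ univ, up p.1 p.2 ≤ M := fun p hp => hM ▸
    (le_csSup (bddAbove_image_prod_univ_of_periodic isCompact_Icc Real.two_pi_pos
      hup.continuousOn hupper) (mem_image_of_mem _ hp)).trans (le_max_right _ _)
  refine ⟨fun ρ₀ φ₀ hρ₀ hval => ?_, fun ρ₀ φ₀ hρ₀ hval => ?_⟩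
  · refine mul_nonpos_of_nonneg_of_nonpos hκ.le <| polarLaplacian_nonpos_of_isMaxOn
      (hum.differentiableOn two_ne_zero) (fun p hp => (hMm p hp).trans_eq hval.symm) hρ₀
      (fun h => h ▸ (hbcm φ₀).ge) fun h => ?_
    subst h
    rw [htrm]
    exact mul_nonpos_of_nonneg_of_nonpos hβ <| sub_nonpos.2 <|
      (hMp (1, φ₀) ⟨left_mem_Icc.2 hR.le, mem_univ _⟩).trans_eq hval.symm
  · refine polarLaplacian_nonpos_of_isMaxOn (hup.differentiableOn two_ne_zero)
      (fun p hp => (hMp p hp).trans_eq hval.symm) hρ₀ (fun h => ?_) fun h => h ▸ (hbcp φ₀).le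
    subst h
    rw [htrp]
    exact mul_nonneg hα <| sub_nonneg.2 <|
      (hMm (1, φ₀) ⟨right_mem_Icc.2 hr1.le, mem_univ _⟩).trans_eq hval.symm

/-- Maximum principle for the two-dimensional operator with transmission conditions. -/
theorem maximum_principle_transmission_2D
    (r R κ α β : ℝ) (hr : 0 < r) (hr1 : r < 1) (hR : 1 < R) (hκ : 0 < κ)
    (hα : 0 ≤ α) (hβ : 0 ≤ β)
    (um up : ℝ → ℝ → ℝ)
    (hum : ContDiffOn ℝ 2 (fun p : ℝ × ℝ => um p.1 p.2) (Icc r 1 ×ˢ (univ : Set ℝ)))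
    (hup : ContDiffOn ℝ 2 (fun p : ℝ × ℝ => up p.1 p.2) (Icc 1 R ×ˢ (univ : Set ℝ)))
    (humper : ∀ ρ φ, um ρ (φ + 2 * Real.pi) = um ρ φ)
    (hupper : ∀ ρ φ, up ρ (φ + 2 * Real.pi) = up ρ φ)
    (hbcm : ∀ φ : ℝ, pdR r 1 um r φ = 0)
    (hbcp : ∀ φ : ℝ, pdR 1 R up R φ = 0)
    (htrp : ∀ φ : ℝ, pdR 1 R up 1 φ = α * (up 1 φ - um 1 φ))
    (htrm : ∀ φ : ℝ, pdR r 1 um 1 φ = β * (up 1 φ - um 1 φ))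
    (M : ℝ)
    (hM : M = max
        (sSup ((fun p : ℝ × ℝ => um p.1 p.2) '' (Icc r 1 ×ˢ (univ : Set ℝ))))
        (sSup ((fun p : ℝ × ℝ => up p.1 p.2) '' (Icc 1 R ×ˢ (univ : Set ℝ))))) :
    (∀ ρ₀ φ₀ : ℝ, ρ₀ ∈ Icc r 1 → um ρ₀ φ₀ = M →
      κ * (pdRR r 1 um ρ₀ φ₀ + ρ₀⁻¹ * pdR r 1 um ρ₀ φ₀
            + (ρ₀ ^ 2)⁻¹ * pdPP um ρ₀ φ₀) ≤ 0) ∧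
    (∀ ρ₀ φ₀ : ℝ, ρ₀ ∈ Icc 1 R → up ρ₀ φ₀ = M →
      pdRR 1 R up ρ₀ φ₀ + ρ₀⁻¹ * pdR 1 R up ρ₀ φ₀
        + (ρ₀ ^ 2)⁻¹ * pdPP up ρ₀ φ₀ ≤ 0) :=
  maximum_principle_transmission_2D_general r R κ α β hr1 hR hκ hα hβ um up hum hup humper hupper
    hbcm hbcp htrp htrm M hM
end

section
/- Maximum principle for the operator on an interval with an isolated external state: suppose (f₋, p) ∈ D(A) and let M = max( sup_{x∈[a,0]} f₋(x), p ). If x₀ ∈ [a,0] and f₋(x₀) = M, then κ f₋''(x₀) ≤ 0; and if p = M, then −α p + α f₋(0) ≤ 0. -/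
open Set

/-- Maximum principle for the operator on an interval with an isolated external
state: a function on `[a,0−] ∪ {0+}` is modeled by a pair `(f₋, p)`. -/
theorem maximum_principle_isolated_state
    (a κ α β : ℝ) (ha : a < 0) (hκ : 0 < κ) (hα : 0 ≤ α) (hβ : 0 ≤ β)
    (fm : ℝ → ℝ) (p : ℝ)
    (hfm : ContDiffOn ℝ 2 fm (Icc a 0))
    (hbc : dIcc a 0 fm a = 0)
    (htr : dIcc a 0 fm 0 = β * (p - fm 0))
    (M : ℝ) (hM : M = max (sSup (fm '' Icc a 0)) p) :
    (∀ x₀ ∈ Icc a 0, fm x₀ = M → κ * d2Icc a 0 fm x₀ ≤ 0) ∧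
    (p = M → -α * p + α * fm 0 ≤ 0) := by
  have hS : UniqueDiffOn ℝ (Icc a 0) := uniqueDiffOn_Icc ha
  have hbdd : BddAbove (fm '' Icc a 0) :=
    isCompact_Icc.bddAbove_image hfm.continuousOn
  have hle : ∀ x ∈ Icc a 0, fm x ≤ M := fun x hx =>
    hM ▸ le_trans (le_csSup hbdd ⟨x, hx, rfl⟩) (le_max_left _ _)
  have hpM : p ≤ M := hM ▸ le_max_right _ _
  have h0mem : (0 : ℝ) ∈ Icc a 0 := ⟨le_of_lt ha, le_refl 0⟩
  constructor
  · intro x₀ hx₀ hfx₀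
    by_contra hcon
    push_neg at hcon
    have hpos : 0 < d2Icc a 0 fm x₀ := by by_contra hneg; push_neg at hneg; nlinarith [mul_nonpos_of_nonneg_of_nonpos hκ.le hneg]
    set g : ℝ → ℝ := derivWithin fm (Icc a 0) with hgdef
    have hg1 : ContDiffOn ℝ 1 g (Icc a 0) := hfm.derivWithin hS (by norm_num)
    have hgc : ContinuousOn g (Icc a 0) := hg1.continuousOn
    have hhc : ContinuousOn (derivWithin g (Icc a 0)) (Icc a 0) :=
      hg1.continuousOn_derivWithin hS le_rfl
    have hev : ∀ᶠ y in nhdsWithin x₀ (Icc a 0), 0 < derivWithin g (Icc a 0) y :=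
      (hhc x₀ hx₀) (Ioi_mem_nhds hpos)
    rw [Filter.eventually_iff, Metric.mem_nhdsWithin_iff] at hev
    obtain ⟨ε, hε, hball⟩ := hev
    set lo : ℝ := max a (x₀ - ε / 2) with hlo
    set hi : ℝ := min 0 (x₀ + ε / 2) with hhi
    have hlox : lo ≤ x₀ := max_le hx₀.1 (by linarith)
    have hxhi : x₀ ≤ hi := le_min hx₀.2 (by linarith)
    have hJsub : Icc lo hi ⊆ Icc a 0 := fun y hy =>
      ⟨le_trans (le_max_left _ _) hy.1, le_trans hy.2 (min_le_left _ _)⟩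
    have hJball : ∀ y ∈ Icc lo hi, 0 < derivWithin g (Icc a 0) y := by
      intro y hy
      have h1 : x₀ - ε / 2 ≤ y := le_trans (le_max_right _ _) hy.1
      have h2 : y ≤ x₀ + ε / 2 := le_trans hy.2 (min_le_right _ _)
      have : y ∈ Metric.ball x₀ ε ∩ Icc a 0 := by
        constructor
        · rw [Metric.mem_ball, Real.dist_eq, abs_lt]; constructor <;> linarith
        · exact hJsub hy
      exact hball this
    have hmono : StrictMonoOn g (Icc lo hi) := by
      apply strictMonoOn_of_deriv_pos (convex_Icc _ _) (hgc.mono hJsub)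
      intro x hx
      rw [interior_Icc] at hx
      have hxI : x ∈ Icc lo hi := ⟨le_of_lt hx.1, le_of_lt hx.2⟩
      have hxO : a < x ∧ x < 0 :=
        ⟨lt_of_le_of_lt (le_max_left _ _) hx.1, lt_of_lt_of_le hx.2 (min_le_left _ _)⟩
      rw [← derivWithin_of_mem_nhds (Icc_mem_nhds hxO.1 hxO.2)]
      exact hJball x hxI
    have hx₀J : x₀ ∈ Icc lo hi := ⟨hlox, hxhi⟩
    rcases lt_or_eq_of_le hx₀.2 with hx0 | hx0
    · -- x₀ < 0
      have hg0 : 0 ≤ g x₀ := by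
        rcases eq_or_lt_of_le hx₀.1 with hxa | hxa
        · rw [← hxa]; rw [show g a = dIcc a 0 fm a from rfl, hbc]
        · have hmem : Icc a 0 ∈ nhds x₀ := Icc_mem_nhds hxa hx0
          have hloc : IsLocalMax fm x₀ := by
            filter_upwards [hmem] with y hy
            rw [hfx₀]; exact hle y hy
          rw [hgdef, derivWithin_of_mem_nhds hmem, hloc.deriv_eq_zero]
      have hxhi' : x₀ < hi := lt_min hx0 (by linarith)
      have hgpos : ∀ x ∈ Ioo x₀ hi, 0 < deriv fm x := by
        intro x hx
        have hxa : a < x := lt_of_le_of_lt hx₀.1 hx.1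
        have hx0' : x < 0 := lt_of_lt_of_le hx.2 (min_le_left _ _)
        rw [show deriv fm x = g x from (derivWithin_of_mem_nhds (Icc_mem_nhds hxa hx0')).symm]
        calc (0:ℝ) ≤ g x₀ := hg0
          _ < g x := hmono hx₀J ⟨le_trans hlox hx.1.le, hx.2.le⟩ hx.1
      have hfmono : StrictMonoOn fm (Icc x₀ hi) := by
        apply strictMonoOn_of_deriv_pos (convex_Icc _ _)
          (hfm.continuousOn.mono (Icc_subset_Icc hx₀.1 (min_le_left _ _)))
        intro x hx
        rw [interior_Icc] at hx
        exact hgpos x hx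
      have : fm hi > M := by
        rw [← hfx₀]
        exact hfmono ⟨le_refl _, hxhi'.le⟩ ⟨hxhi'.le, le_refl _⟩ hxhi'
      have : fm hi ≤ M := hle hi ⟨le_trans hx₀.1 hxhi, min_le_left _ _⟩
      linarith
    · -- x₀ = 0
      subst hx0
      have hg0 : g 0 ≤ 0 := by
        rw [show g 0 = dIcc a 0 fm 0 from rfl, htr]
        have : p - fm 0 ≤ 0 := by rw [hfx₀]; linarith
        exact mul_nonpos_of_nonneg_of_nonpos hβ this
      have hlo0 : lo < 0 := max_lt ha (by linarith)
      have hgneg : ∀ x ∈ Ioo lo (0:ℝ), deriv fm x < 0 := by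
        intro x hx
        have hxa : a < x := lt_of_le_of_lt (le_max_left _ _) hx.1
        rw [show deriv fm x = g x from (derivWithin_of_mem_nhds (Icc_mem_nhds hxa hx.2)).symm]
        calc g x < g 0 := hmono ⟨hx.1.le, le_trans hx.2.le hxhi⟩ hx₀J hx.2
          _ ≤ 0 := hg0
      have hfanti : StrictAntiOn fm (Icc lo 0) := by
        apply strictAntiOn_of_deriv_neg (convex_Icc _ _)
          (hfm.continuousOn.mono (Icc_subset_Icc (le_max_left _ _) (le_refl 0)))
        intro x hx
        rw [interior_Icc] at hx
        exact hgneg x hx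
      have : fm lo > M := by
        rw [← hfx₀]
        exact hfanti ⟨le_refl _, hlo0.le⟩ ⟨hlo0.le, le_refl _⟩ hlo0
      have : fm lo ≤ M := hle lo ⟨le_max_left _ _, hlo0.le⟩
      linarith
  · intro hp
    have h0 : fm 0 ≤ M := hle 0 h0mem
    nlinarith [mul_nonneg hα (sub_nonneg.mpr h0)]
end
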